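/- The Wiener index of the third Sierpi\'nski carpet graph $\Gamma_3$ equals 31264. -/

import Mathlib

/-!
The eight small holes of `Γ₃` contain no lattice point, so the only obstacle to `ℓ¹`-geodesics
is the central hole `(3, 6)²`. A path between two points of the columns `x ∈ {4, 5}` lying below
and above that hole has to detour to `x = 3` or `x = 6`, which costs exactly `2`; the same holds
for the rows `y ∈ {4, 5}`. Hence `d = ℓ¹ + 2 · [the hole separates the points]`. This is
certified as the graph distance by a breadth-first-search argument: the candidate grows by at
most one along every edge, and every vertex other than the source has a neighbour at which it
drops by exactly one. The sum of the candidate over all pairs is then evaluated.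
-/

/-- ℓ¹ distance on ℤ². -/
def l1 (u v : ℤ × ℤ) : ℕ := (u.1 - v.1).natAbs + (u.2 - v.2).natAbs

/-- The grid graph on ℤ². -/
def gridGraph : SimpleGraph (ℤ × ℤ) where
  Adj u v := l1 u v = 1
  symm := by constructor; intro u v h; unfold l1 at *; omega
  loopless := by constructor; intro u h; unfold l1 at h; omega

/-- A lattice point is a vertex of the level-`n` discrete Sierpiński carpet. -/
def carpetVertex (n : ℕ) (p : ℤ × ℤ) : Prop :=
  0 ≤ p.1 ∧ p.1 ≤ 3 ^ (n - 1) ∧ 0 ≤ p.2 ∧ p.2 ≤ 3 ^ (n - 1) ∧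
  ∀ s < n - 1, ¬ ((3:ℤ)^s < p.1 % 3^(s+1) ∧ p.1 % 3^(s+1) < 2*3^s ∧
      (3:ℤ)^s < p.2 % 3^(s+1) ∧ p.2 % 3^(s+1) < 2*3^s)

instance (n : ℕ) : DecidablePred (carpetVertex n) := fun p => by
  unfold carpetVertex; infer_instance

/-- The level-`n` Sierpiński carpet graph, as a graph on ℤ². -/
def carpetGraph (n : ℕ) : SimpleGraph (ℤ × ℤ) where
  Adj u v := carpetVertex n u ∧ carpetVertex n v ∧ l1 u v = 1
  symm := by constructor; rintro u v ⟨h1, h2, h3⟩; exact ⟨h2, h1, by unfold l1 at *; omega⟩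
  loopless := by constructor; rintro u ⟨-, -, h⟩; unfold l1 at h; omega

/-- The vertex set of the level-`n` carpet graph. -/
noncomputable def carpetVerts (n : ℕ) : Finset (ℤ × ℤ) :=
  ((Finset.Icc (0:ℤ) (3^(n-1))) ×ˢ (Finset.Icc (0:ℤ) (3^(n-1)))).filter (carpetVertex n)

namespace SimpleGraph

variable {V : Type*} {G : SimpleGraph V} {f : V → ℕ}

lemma Walk.le_add_length_of_adj_le (hf : ∀ v w, G.Adj v w → f v ≤ f w + 1) {a b : V}
    (p : G.Walk a b) : f a ≤ f b + p.length := by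
  induction p with
  | nil => simp
  | cons h q ih =>
    rw [Walk.length_cons]
    linarith [hf _ _ h]

lemma le_add_dist_of_adj_le (hf : ∀ v w, G.Adj v w → f v ≤ f w + 1) {u v : V}
    (h : G.Reachable u v) : f v ≤ f u + G.dist u v := by
  obtain ⟨p, hp⟩ := h.symm.exists_walk_length_eq_dist
  rw [dist_comm, ← hp]
  exact p.le_add_length_of_adj_le hf

lemma reachable_and_dist_le_of_descent {S : Set V} {u : V} (hu : f u = 0)
    (hdesc : ∀ v ∈ S, v ≠ u → ∃ w ∈ S, G.Adj w v ∧ f w + 1 = f v) :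
    ∀ v ∈ S, G.Reachable u v ∧ G.dist u v ≤ f v := by
  suffices ∀ n, ∀ v ∈ S, f v = n → G.Reachable u v ∧ G.dist u v ≤ f v from
    fun v hv ↦ this _ v hv rfl
  intro n
  induction n using Nat.strong_induction_on with
  | _ n ih =>
    intro v hv hn
    by_cases hvu : v = u
    · subst hvu
      simp [hu]
    obtain ⟨w, hw, hwv, hfw⟩ := hdesc v hv hvu
    obtain ⟨hreach, hdist⟩ := ih (f w) (by omega) w hw rfl
    refine ⟨hreach.trans hwv.reachable, ?_⟩
    calc G.dist u v ≤ G.dist u w + G.dist w v := hreach.dist_triangle_left v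
      _ = G.dist u w + 1 := by rw [dist_eq_one_iff_adj.mpr hwv]
      _ ≤ f v := by omega

theorem dist_eq_of_descent {S : Set V} {u : V} (hu : f u = 0)
    (hf : ∀ v w, G.Adj v w → f v ≤ f w + 1)
    (hdesc : ∀ v ∈ S, v ≠ u → ∃ w ∈ S, G.Adj w v ∧ f w + 1 = f v) {v : V} (hv : v ∈ S) :
    G.dist u v = f v := by
  obtain ⟨hreach, hle⟩ := reachable_and_dist_le_of_descent hu hdesc v hv
  have := le_add_dist_of_adj_le hf hreach
  omega

end SimpleGraph

lemma mem_carpetVerts_of_adj {n : ℕ} {v w : ℤ × ℤ} (h : (carpetGraph n).Adj v w) :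
    v ∈ carpetVerts n := by
  have hv := h.1
  simp only [carpetVerts, Finset.mem_filter, Finset.mem_product, Finset.mem_Icc]
  exact ⟨⟨⟨hv.1, hv.2.1⟩, hv.2.2.1, hv.2.2.2.1⟩, hv⟩

instance (n : ℕ) : DecidableRel (carpetGraph n).Adj := fun u v =>
  decidable_of_iff (carpetVertex n u ∧ carpetVertex n v ∧ l1 u v = 1) Iff.rfl

-- A list rather than a set, so that `decide` can quantify over the four candidate neighbours.
def latticeNeighbors (v : ℤ × ℤ) : List (ℤ × ℤ) :=
  [(v.1 + 1, v.2), (v.1 - 1, v.2), (v.1, v.2 + 1), (v.1, v.2 - 1)]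

lemma mem_latticeNeighbors_of_l1_eq_one {v w : ℤ × ℤ} (h : l1 v w = 1) :
    w ∈ latticeNeighbors v := by
  unfold l1 at h
  simp only [latticeNeighbors, List.mem_cons, Prod.ext_iff]
  omega

def carpetThreeDist (u v : ℤ × ℤ) : ℕ :=
  l1 u v +
    (if (4 ≤ u.1 ∧ u.1 ≤ 5 ∧ 4 ≤ v.1 ∧ v.1 ≤ 5 ∧ (u.2 ≤ 3 ∧ 6 ≤ v.2 ∨ v.2 ≤ 3 ∧ 6 ≤ u.2)) ∨
        (4 ≤ u.2 ∧ u.2 ≤ 5 ∧ 4 ≤ v.2 ∧ v.2 ≤ 5 ∧ (u.1 ≤ 3 ∧ 6 ≤ v.1 ∨ v.1 ≤ 3 ∧ 6 ≤ u.1))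
     then 2 else 0)

lemma carpetThreeDist_self (u : ℤ × ℤ) : carpetThreeDist u u = 0 := by
  unfold carpetThreeDist l1
  rw [if_neg]
  · omega
  · rintro (⟨-, -, -, -, h⟩ | ⟨-, -, -, -, h⟩) <;> omega

set_option maxRecDepth 100000 in
set_option maxHeartbeats 8000000 in
lemma carpetThreeDist_le_of_mem_latticeNeighbors :
    ∀ u ∈ carpetVerts 3, ∀ v ∈ carpetVerts 3, ∀ w ∈ latticeNeighbors v, carpetVertex 3 w →
      carpetThreeDist u v ≤ carpetThreeDist u w + 1 := by
  decide

set_option maxRecDepth 100000 in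
set_option maxHeartbeats 8000000 in
lemma exists_adj_carpetThreeDist_add_one :
    ∀ u ∈ carpetVerts 3, ∀ v ∈ carpetVerts 3, v ≠ u →
      ∃ w ∈ latticeNeighbors v, (carpetGraph 3).Adj w v ∧
        carpetThreeDist u w + 1 = carpetThreeDist u v := by
  decide

lemma carpetGraph_three_dist {u v : ℤ × ℤ} (hu : u ∈ carpetVerts 3) (hv : v ∈ carpetVerts 3) :
    (carpetGraph 3).dist u v = carpetThreeDist u v := by
  refine SimpleGraph.dist_eq_of_descent (S := ↑(carpetVerts 3)) (carpetThreeDist_self u)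
    (fun v w h ↦ ?_) (fun v hv hvu ↦ ?_) hv
  · exact carpetThreeDist_le_of_mem_latticeNeighbors u hu v (mem_carpetVerts_of_adj h) w
      (mem_latticeNeighbors_of_l1_eq_one h.2.2) h.2.1
  · obtain ⟨w, -, hwv, hw⟩ := exists_adj_carpetThreeDist_add_one u hu v hv hvu
    exact ⟨w, mem_carpetVerts_of_adj hwv, hwv, hw⟩

set_option maxRecDepth 100000 in
set_option maxHeartbeats 8000000 in
lemma sum_carpetThreeDist :
    (∑ u ∈ carpetVerts 3, ∑ v ∈ carpetVerts 3, carpetThreeDist u v) / 2 = 31264 := by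
  decide

/-- The Wiener index of the level-3 Sierpiński carpet graph equals 31264. -/
theorem wiener_index_carpet_three :
    (∑ u ∈ carpetVerts 3, ∑ v ∈ carpetVerts 3, (carpetGraph 3).dist u v) / 2 = 31264 := by
  rw [Finset.sum_congr rfl fun u hu ↦ Finset.sum_congr rfl fun v hv ↦ carpetGraph_three_dist hu hv]
  exact sum_carpetThreeDist
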